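/- arXiv:2509.20730 — 6 statements merged into one kernel-verified Lean document; each statement's English description precedes it below -/
import Mathlib

section
/- For a synchronous automaton whose updates are s_r ← ∧_{δ∈R^∧} s_{r+δ} on even steps and s_r ← ∨_{δ∈R^∨} s_{r+δ} on odd steps, if R^∨ = R_π(R^∧) where R_π is rotation by π (negation of vectors), then every configuration consisting of two half-plane domains separated by a single straight domain wall is invariant (up to the appropriate parity) in the sense that the domain wall does not move: the drift velocity of any infinite straight domain wall is zero. -/
/-! Opening by `Rw` (erosion by `Rw`, then dilation by `-Rw`) is anti-extensive, and it fixes every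
half-plane: a point `r` of the half-plane lies in the translate `r - δ₀ + Rw`, where `δ₀ ∈ Rw`
minimises the height `δ · n`, and that whole translate lies in the half-plane. For `Rw = ∅` the step
erases everything, which no translate of a half-plane is, so the drift hypothesis is contradictory. -/

/-- The OR update over offsets `Rv`: result is +1 (`true`) unless all spins in
the neighborhood are −1. -/
def orUpd (Rv : Finset (ℤ × ℤ)) (s : ℤ × ℤ → Bool) : ℤ × ℤ → Bool :=
  fun r => decide (∃ δ ∈ Rv, s (r + δ) = true)

/-- The AND update over offsets `Rw`: result is −1 (`false`) unless all spins
in the neighborhood are +1. -/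
def andUpd (Rw : Finset (ℤ × ℤ)) (s : ℤ × ℤ → Bool) : ℤ × ℤ → Bool :=
  fun r => decide (∀ δ ∈ Rw, s (r + δ) = true)

/-- One combined synchronous step: the AND update (even substep) followed by
the OR update (odd substep). -/
def sqzStep (Rw Rv : Finset (ℤ × ℤ)) (s : ℤ × ℤ → Bool) : ℤ × ℤ → Bool :=
  orUpd Rv (andUpd Rw s)

/-- The half-plane domain-wall configuration with normal `n` and offset `a`:
+1 on `{r : r·n > a}` and −1 on its complement. -/
def halfPlane (n : ℤ × ℤ) (a : ℤ) : ℤ × ℤ → Bool :=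
  fun r => decide (a < r.1 * n.1 + r.2 * n.2)

theorem sqzStep_neg_le (Rw : Finset (ℤ × ℤ)) (s : ℤ × ℤ → Bool) :
    sqzStep Rw (Rw.image fun δ => -δ) s ≤ s := fun r => Bool.le_iff_imp.mpr fun h => by
  obtain ⟨_, hmem, hall⟩ := of_decide_eq_true h
  obtain ⟨δ, hδ, rfl⟩ := Finset.mem_image.mp hmem
  simpa using of_decide_eq_true hall δ hδ

theorem sqzStep_neg_halfPlane {Rw : Finset (ℤ × ℤ)} (hRw : Rw.Nonempty) (n : ℤ × ℤ) (a : ℤ) :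
    sqzStep Rw (Rw.image fun δ => -δ) (halfPlane n a) = halfPlane n a := by
  refine le_antisymm (sqzStep_neg_le Rw _) fun r => Bool.le_iff_imp.mpr fun hr => ?_
  obtain ⟨δ₀, hδ₀, hmin⟩ := Rw.exists_min_image (fun δ => δ.1 * n.1 + δ.2 * n.2) hRw
  refine decide_eq_true ⟨-δ₀, Finset.mem_image_of_mem _ hδ₀, decide_eq_true fun δ hδ => ?_⟩
  have hr := of_decide_eq_true hr
  have := hmin δ hδ
  refine decide_eq_true ?_
  simp only [Prod.fst_add, Prod.snd_add, Prod.fst_neg, Prod.snd_neg]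
  linarith

theorem sqzStep_empty (s : ℤ × ℤ → Bool) : sqzStep ∅ ∅ s = fun _ => false := by
  funext r
  simp [sqzStep, orUpd]

theorem exists_halfPlane_eq_true {n : ℤ × ℤ} (hn : n ≠ 0) (a : ℤ) :
    ∃ r, halfPlane n a r = true := by
  have hnorm : 1 ≤ n.1 * n.1 + n.2 * n.2 := by
    obtain h | h : n.1 ≠ 0 ∨ n.2 ≠ 0 := by
      by_contra! h
      exact hn (Prod.ext h.1 h.2)
    · nlinarith [Int.one_le_abs h, abs_mul_abs_self n.1, mul_self_nonneg n.2]
    · nlinarith [Int.one_le_abs h, abs_mul_abs_self n.2, mul_self_nonneg n.1]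
  refine ⟨(|a| + 1) • n, decide_eq_true ?_⟩
  simp only [Prod.smul_fst, Prod.smul_snd, smul_eq_mul]
  nlinarith [le_abs_self a, abs_nonneg a]

/-- If `R^∨ = R_π(R^∧)` (rotation by π, i.e. negation of all offsets), then a
straight infinite domain wall cannot drift: if the combined update maps a
half-plane domain-wall state to a translate of itself, the translation must be
trivial on the wall, i.e. the wall does not move. -/
theorem wall_does_not_move_of_pi_rotation
    (Rw Rv : Finset (ℤ × ℤ)) (hsym : Rv = Rw.image (fun δ => -δ))
    (n : ℤ × ℤ) (hn : n ≠ 0) (a : ℤ) (v : ℤ × ℤ)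
    (hmove : sqzStep Rw Rv (halfPlane n a) = fun r => halfPlane n a (r - v)) :
    sqzStep Rw Rv (halfPlane n a) = halfPlane n a := by
  subst hsym
  rcases Rw.eq_empty_or_nonempty with rfl | hRw
  · obtain ⟨r, hr⟩ := exists_halfPlane_eq_true hn a
    have := congrFun hmove (r + v)
    simp [sqzStep_empty, hr] at this
  · exact sqzStep_neg_halfPlane hRw n a
end

section
/- Under noiseless asynchronous R dynamics on a torus (Z/LZ)^2 with L ≥ 2, the only absorbing states are the all-plus and all-minus configurations. Precisely: if a configuration s is such that no single-site OR update s_r ← s_{r+x̂} ∨ s_r ∨ s_{r−x̂} and no single-site AND update s_r ← s_{r+ŷ} ∧ s_r ∧ s_{r−ŷ} changes any spin, then s is constant. -/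
/-!
A `false` spin survives the OR update only if both horizontal neighbours are `false`, so its whole
row is `false`; dually a `true` spin survives the AND update only if its whole column is `true`.
A `false` row and a `true` column always meet, so both kinds of spin cannot occur together.
-/

theorem ZMod.forall_of_closed_add_one_sub_one {n : ℕ} {p : ZMod n → Prop} {a : ZMod n} (ha : p a)
    (hstep : ∀ x, p x → p (x + 1) ∧ p (x - 1)) (x : ZMod n) : p x := by
  obtain ⟨k, rfl⟩ : ∃ k : ℤ, a + k = x := ⟨(x - a).cast, by simp⟩
  induction k using Int.induction_on with
  | zero => simpa using ha
  | succ k ih => simpa [add_assoc] using (hstep _ ih).1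
  | pred k ih => simpa [sub_eq_add_neg, add_assoc] using (hstep _ ih).2

section

variable {L : ℕ} {s : ZMod L × ZMod L → Bool}

theorem row_false_of_absorbing_or
    (hOr : ∀ r : ZMod L × ZMod L, s r = (s (r.1 + 1, r.2) || s r || s (r.1 - 1, r.2)))
    {a b : ZMod L} (h : s (a, b) = false) (a' : ZMod L) : s (a', b) = false := by
  refine ZMod.forall_of_closed_add_one_sub_one (p := fun x => s (x, b) = false) h
    (fun x hx => ?_) a'
  have hx' := hOr (x, b)
  rw [hx, eq_comm] at hx'
  simpa using hx'

theorem column_true_of_absorbing_and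
    (hAnd : ∀ r : ZMod L × ZMod L, s r = (s (r.1, r.2 + 1) && s r && s (r.1, r.2 - 1)))
    {a b : ZMod L} (h : s (a, b) = true) (b' : ZMod L) : s (a, b') = true := by
  refine ZMod.forall_of_closed_add_one_sub_one (p := fun y => s (a, y) = true) h
    (fun y hy => ?_) b'
  have hy' := hAnd (a, y)
  rw [hy, eq_comm] at hy'
  simpa using hy'

end

theorem absorbing_states_R_general (L : ℕ)
    (s : ZMod L × ZMod L → Bool)
    (hOr : ∀ r : ZMod L × ZMod L,
      s r = (s (r.1 + 1, r.2) || s r || s (r.1 - 1, r.2)))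
    (hAnd : ∀ r : ZMod L × ZMod L,
      s r = (s (r.1, r.2 + 1) && s r && s (r.1, r.2 - 1))) :
    (∀ r, s r = true) ∨ (∀ r, s r = false) := by
  refine or_iff_not_imp_left.2 fun hne => ?_
  obtain ⟨⟨a, b⟩, hab⟩ : ∃ r, s r = false := by simpa using hne
  rintro ⟨a', b'⟩
  by_contra h
  have hrow := row_false_of_absorbing_or hOr hab a'
  have hcol := column_true_of_absorbing_and hAnd (Bool.eq_true_of_not_eq_false h) b
  simp [hrow] at hcol

/-- Under noiseless asynchronous R dynamics on the torus `(ℤ/Lℤ)²` with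
`L ≥ 2` (`true` = +1, `false` = −1), if no single-site OR update
`s_r ← s_{r+x̂} ∨ s_r ∨ s_{r−x̂}` and no single-site AND update
`s_r ← s_{r+ŷ} ∧ s_r ∧ s_{r−ŷ}` changes any spin, then `s` is constant:
the only absorbing states are all-plus and all-minus. -/
theorem absorbing_states_R (L : ℕ) (hL : 2 ≤ L)
    (s : ZMod L × ZMod L → Bool)
    (hOr : ∀ r : ZMod L × ZMod L,
      s r = (s (r.1 + 1, r.2) || s r || s (r.1 - 1, r.2)))
    (hAnd : ∀ r : ZMod L × ZMod L,
      s r = (s (r.1, r.2 + 1) && s r && s (r.1, r.2 - 1))) :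
    (∀ r, s r = true) ∨ (∀ r, s r = false) :=
  absorbing_states_R_general L s hOr hAnd
end

section
/- Under noiseless asynchronous F dynamics on a torus, the only absorbing states are the all-plus and all-minus configurations, where the F rule uses OR over {x̂, −x̂−ŷ} and AND over {x̂+ŷ, −ŷ}. -/
/-!
A `−1` spin (`false`) can only survive the OR update if both of its OR neighbours are `−1`,
so the set of `−1` sites is closed under the translations `x̂` and `−x̂−ŷ`, hence under the
monoid they generate. On the finite torus that monoid is the whole group, so a single `−1`
spin forces every spin to be `−1`.
-/

section OrRule

variable {G : Type*} {s : G → Bool} {a b : G}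

theorem eq_false_add_of_mem_closure_of_or_rule [AddMonoid G]
    (hOr : ∀ r, s r = (s (r + a) || s (r + b))) {r g : G} (hr : s r = false)
    (hg : g ∈ AddSubmonoid.closure {a, b}) : s (r + g) = false := by
  induction hg using AddSubmonoid.closure_induction generalizing r with
  | mem g hg =>
    have hab : s (r + a) = false ∧ s (r + b) = false := by
      rwa [hOr r, Bool.or_eq_false_iff] at hr
    rcases hg with rfl | rfl
    exacts [hab.1, hab.2]
  | zero => rwa [add_zero]
  | add g h _ _ ihg ihh => rw [← add_assoc]; exact ihh (ihg hr)

theorem eq_const_of_or_rule_of_closure_eq_top [AddGroup G]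
    (hOr : ∀ r, s r = (s (r + a) || s (r + b)))
    (hgen : AddSubmonoid.closure {a, b} = ⊤) :
    (∀ r, s r = true) ∨ (∀ r, s r = false) := by
  refine or_iff_not_imp_left.mpr fun hne t => ?_
  obtain ⟨r, hr⟩ := not_forall.mp hne
  have := eq_false_add_of_mem_closure_of_or_rule hOr (g := -r + t)
    (Bool.eq_false_iff.mpr hr) (hgen ▸ AddSubmonoid.mem_top _)
  rwa [add_neg_cancel_left] at this

end OrRule

theorem ZMod.addSubmonoid_closure_or_rule_eq_top (L : ℕ) [NeZero L] :
    AddSubmonoid.closure {((1 : ZMod L), (0 : ZMod L)), (-1, -1)} = ⊤ := by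
  set M := AddSubmonoid.closure {((1 : ZMod L), (0 : ZMod L)), (-1, -1)}
  have hx : ((1 : ZMod L), (0 : ZMod L)) ∈ M := AddSubmonoid.subset_closure (by simp)
  have hxy : ((-1 : ZMod L), (-1 : ZMod L)) ∈ M := AddSubmonoid.subset_closure (by simp)
  have hy : ((0 : ZMod L), (-1 : ZMod L)) ∈ M := by simpa using M.add_mem hx hxy
  refine eq_top_iff.mpr fun ⟨x, y⟩ _ => ?_
  have hval : ((x, y) : ZMod L × ZMod L) = x.val • (1, 0) + (-y).val • (0, -1) := by
    ext <;> simp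
  exact hval ▸ M.add_mem (M.nsmul_mem hx _) (M.nsmul_mem hy _)

theorem absorbing_states_F_general (L : ℕ) (hL : 2 ≤ L)
    (s : ZMod L × ZMod L → Bool)
    (hOr : ∀ r : ZMod L × ZMod L,
      s r = (s (r.1 + 1, r.2) || s (r.1 - 1, r.2 - 1))) :
    (∀ r, s r = true) ∨ (∀ r, s r = false) := by
  have : NeZero L := ⟨by omega⟩
  exact eq_const_of_or_rule_of_closure_eq_top (a := (1, 0)) (b := (-1, -1))
    (fun ⟨x, y⟩ => by simpa [sub_eq_add_neg] using hOr (x, y))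
    (ZMod.addSubmonoid_closure_or_rule_eq_top L)

/-- Under noiseless asynchronous F dynamics on the torus `(ℤ/Lℤ)²` with
`L ≥ 2` (`true` = +1, `false` = −1), if no single-site OR update
`s_r ← s_{r+x̂} ∨ s_{r−x̂−ŷ}` and no single-site AND update
`s_r ← s_{r+x̂+ŷ} ∧ s_{r−ŷ}` changes any spin, then `s` is constant:
the only absorbing states are all-plus and all-minus. -/
theorem absorbing_states_F (L : ℕ) (hL : 2 ≤ L)
    (s : ZMod L × ZMod L → Bool)
    (hOr : ∀ r : ZMod L × ZMod L,
      s r = (s (r.1 + 1, r.2) || s (r.1 - 1, r.2 - 1)))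
    (hAnd : ∀ r : ZMod L × ZMod L,
      s r = (s (r.1 + 1, r.2 + 1) && s (r.1, r.2 - 1))) :
    (∀ r, s r = true) ∨ (∀ r, s r = false) :=
  absorbing_states_F_general L hL s hOr
end

section
/- Factorizing the master equation ∂_t m = −m + ηp + (1−p)·E[⋀-term + ⋁-term]/(normalization) under the independence assumption that n-point spin correlators equal m^n yields, for an automaton with |R^∧| = |R^∨| = n sites per update neighborhood, the equation ∂_t m = −m + ηp + ((1−p)/2^{n−1}) Σ_{k=0}^{⌊(n−1)/2⌋} C(n, 2k+1) m^{2k+1}. In particular for n = 2 this gives ∂_t m = p(η − m), and for n = 3 it gives ∂_t m = pη − ((1+3p)/4)m + ((1−p)/4)m³. -/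
/-!
Averaging the factorized ∧ and ∨ updates gives `((1 + m)ⁿ - (1 - m)ⁿ) / 2ⁿ`. In the difference
of the two binomial expansions the even powers of `m` cancel and the odd ones double, which
leaves `2^{1-n} Σₖ C(n, 2k+1) m^{2k+1}`.
-/

open Finset

theorem Finset.sum_filter_odd_range {M : Type*} [AddCommMonoid M] (f : ℕ → M) (n : ℕ) :
    ∑ j ∈ range n with Odd j, f j = ∑ k ∈ range (n / 2), f (2 * k + 1) := by
  refine sum_nbij' (fun j ↦ j / 2) (fun k ↦ 2 * k + 1) ?_ ?_ ?_ ?_ fun j hj ↦ congrArg f ?_ <;>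
    simp only [mem_filter, mem_range, Nat.odd_iff] at * <;>
    omega

theorem one_add_pow_sub_one_sub_pow {R : Type*} [CommRing R] (x : R) (n : ℕ) :
    (1 + x) ^ n - (1 - x) ^ n
      = 2 * ∑ k ∈ range ((n + 1) / 2), (n.choose (2 * k + 1) : R) * x ^ (2 * k + 1) := by
  have hterm : ∀ j ∈ range (n + 1), (n.choose j : R) * x ^ j - n.choose j * (-x) ^ j
      = if Odd j then 2 * (n.choose j * x ^ j) else 0 := by
    intro j _
    rcases Nat.even_or_odd j with he | ho
    · simp [he.neg_pow, Nat.not_odd_iff_even.mpr he]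
    · rw [if_pos ho, ho.neg_pow]
      ring
  rw [show (1 : R) - x = -x + 1 by ring, add_comm 1 x, add_pow, add_pow, ← sum_sub_distrib]
  simp only [one_pow, mul_one, mul_comm _ (n.choose _ : R)]
  rw [sum_congr rfl hterm, ← sum_filter, sum_filter_odd_range, mul_sum]

/-- Mean-field factorization of the master equation.  For an automaton whose
∧ and ∨ update neighborhoods each contain `n` sites (each update applied with
probability 1/2 when the noise, of strength `p` and bias `η`, does not act),
the independence assumption `E[∏ sᵢ] = mⁿ` yields
`∂ₜm = −m + ηp + ((1−p)/2^{n−1}) Σₖ C(n,2k+1) m^{2k+1}`;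
for `n = 2` this reduces to `∂ₜm = p(η−m)`, and for `n = 3` to
`∂ₜm = pη − ((1+3p)/4)m + ((1−p)/4)m³`. -/
theorem meanfield_master_equation (n : ℕ) (hn : 1 ≤ n) (p η m : ℝ) :
    (-m + η * p + (1 - p) * ((2 * ((1 + m) / 2) ^ n - 1)
        + (1 - 2 * ((1 - m) / 2) ^ n)) / 2
      = -m + η * p + (1 - p) / 2 ^ (n - 1) *
          ∑ k ∈ Finset.range ((n - 1) / 2 + 1),
            (n.choose (2 * k + 1) : ℝ) * m ^ (2 * k + 1)) ∧
    (-m + η * p + (1 - p) * ((2 * ((1 + m) / 2) ^ 2 - 1)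
        + (1 - 2 * ((1 - m) / 2) ^ 2)) / 2 = p * (η - m)) ∧
    (-m + η * p + (1 - p) * ((2 * ((1 + m) / 2) ^ 3 - 1)
        + (1 - 2 * ((1 - m) / 2) ^ 3)) / 2
      = p * η - (1 + 3 * p) / 4 * m + (1 - p) / 4 * m ^ 3) := by
  refine ⟨?_, by ring, by ring⟩
  rw [show (n - 1) / 2 + 1 = (n + 1) / 2 by omega, div_pow, div_pow,
    ← pow_sub_one_mul (by omega : n ≠ 0) (2 : ℝ)]
  field_simp
  linear_combination (1 - p) * one_add_pow_sub_one_sub_pow m n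
end

section
/- In the cluster mean-field disordered fixed point of the R₂ squeezing code (m = f¹⁻ = f²⁻ = 0), the symmetric fluctuation variables satisfy f¹⁺ = √(f²⁺) = (1 − √(1 − ζ²))/ζ where ζ = (1−p)/d; moreover as d → ∞, f¹⁺ = (1−p)/(2d) + O(1/d²). -/
open Asymptotics Filter Topology

/-! The candidate `f = (1 - √(1 - ζ²))/ζ` is the small root of `ζ f² - 2 f + ζ = 0`. With the
ansatz `f²⁺ = f²` both stationarity conditions become multiples of this quadratic. The quadratic
also gives `f - ζ/2 = ζ f²/2`, and `0 ≤ f ≤ ζ` then bounds this by `ζ³/2`. -/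

noncomputable def disorderedFluct (ζ : ℝ) : ℝ := (1 - Real.sqrt (1 - ζ ^ 2)) / ζ

theorem stationary_of_quadratic {ζ f : ℝ} (h : ζ * (1 + f ^ 2) = 2 * f) :
    -2 * f + ζ * (1 + f ^ 2) = 0 ∧ -2 * f ^ 2 + ζ * (f + f * f ^ 2) = 0 :=
  ⟨by linear_combination h, by linear_combination f * h⟩

section

variable {ζ : ℝ}

theorem disorderedFluct_quadratic (hζ : ζ ≠ 0) (hζ1 : ζ ^ 2 ≤ 1) :
    ζ * (1 + disorderedFluct ζ ^ 2) = 2 * disorderedFluct ζ := by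
  have hs : Real.sqrt (1 - ζ ^ 2) ^ 2 = 1 - ζ ^ 2 := Real.sq_sqrt (by linarith)
  unfold disorderedFluct
  field_simp
  linear_combination hs

theorem disorderedFluct_nonneg (hζ : 0 ≤ ζ) : 0 ≤ disorderedFluct ζ := by
  have hs : Real.sqrt (1 - ζ ^ 2) ≤ 1 :=
    Real.sqrt_le_one.mpr (by nlinarith)
  exact div_nonneg (by linarith) hζ

theorem disorderedFluct_le_self (hζ : 0 < ζ) : disorderedFluct ζ ≤ ζ := by
  have hs : 1 - ζ ^ 2 ≤ Real.sqrt (1 - ζ ^ 2) :=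
    Real.le_sqrt_self_iff.mpr (by nlinarith)
  rw [disorderedFluct, div_le_iff₀ hζ]
  nlinarith

theorem abs_disorderedFluct_sub_half_le (hζ : 0 < ζ) (hζ1 : ζ ^ 2 ≤ 1) :
    |disorderedFluct ζ - ζ / 2| ≤ ζ ^ 3 / 2 := by
  have hsub : disorderedFluct ζ - ζ / 2 = ζ * disorderedFluct ζ ^ 2 / 2 := by
    linear_combination -disorderedFluct_quadratic hζ.ne' hζ1 / 2
  have h0 := disorderedFluct_nonneg hζ.le
  have hle := disorderedFluct_le_self hζ
  rw [hsub, abs_of_nonneg (by positivity)]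
  have hsq : disorderedFluct ζ ^ 2 ≤ ζ ^ 2 := pow_le_pow_left₀ h0 hle 2
  nlinarith

end

theorem isBigO_disorderedFluct_sub_half :
    (fun ζ => disorderedFluct ζ - ζ / 2) =O[𝓝[>] 0] fun ζ => ζ ^ 3 := by
  refine isBigO_iff.mpr ⟨1 / 2, ?_⟩
  filter_upwards [Ioo_mem_nhdsGT (zero_lt_one' ℝ)] with ζ ⟨hζ, hζ1⟩
  rw [Real.norm_eq_abs, Real.norm_eq_abs, abs_of_pos (pow_pos hζ 3)]
  linarith [abs_disorderedFluct_sub_half_le hζ (by nlinarith)]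

/-- At the disordered fixed point of the cluster mean-field equations of the
R₂ squeezing code (`m = f¹⁻ = f²⁻ = 0`), the symmetric fluctuation variables
`f¹⁺ = (1 − √(1−ζ²))/ζ` and `f²⁺ = (f¹⁺)²`, with `ζ = (1−p)/d`, solve the
stationarity conditions `0 = −2f¹⁺ + ζ(1 + f²⁺)` and
`0 = −2f²⁺ + ζ(f¹⁺ + f¹⁺f²⁺)`; moreover `f¹⁺ = ζ/2 + O(ζ³)` as `ζ → 0⁺`
(i.e. `f¹⁺ = (1−p)/(2d) + O(1/d²)` as `d → ∞`). -/
theorem r2_disordered_fluctuations :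
    (∀ ζ : ℝ, ζ ∈ Set.Ioo (0 : ℝ) 1 →
      -2 * ((1 - Real.sqrt (1 - ζ ^ 2)) / ζ)
          + ζ * (1 + ((1 - Real.sqrt (1 - ζ ^ 2)) / ζ) ^ 2) = 0 ∧
      -2 * ((1 - Real.sqrt (1 - ζ ^ 2)) / ζ) ^ 2
          + ζ * ((1 - Real.sqrt (1 - ζ ^ 2)) / ζ
            + ((1 - Real.sqrt (1 - ζ ^ 2)) / ζ)
              * ((1 - Real.sqrt (1 - ζ ^ 2)) / ζ) ^ 2) = 0) ∧
    (fun ζ : ℝ => (1 - Real.sqrt (1 - ζ ^ 2)) / ζ - ζ / 2)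
      =O[nhdsWithin 0 (Set.Ioi 0)] fun ζ : ℝ => ζ ^ 3 :=
  ⟨fun _ ⟨hζ, hζ1⟩ =>
      stationary_of_quadratic (disorderedFluct_quadratic hζ.ne' (by nlinarith)),
    isBigO_disorderedFluct_sub_half⟩
end

section
/- Linearizing the cluster mean-field equations of the R₂ squeezing code about its disordered fixed point, the disordered state loses stability exactly at p_c = 1/(1 + 4d²); in particular p_c = 1/17 in dimension d = 2, and p_c ~ 1/(4d²) as d → ∞. -/
/-! At the disordered point `f = f¹⁺` solves `ζ (1 + f²) = 2 f`, and `s = √(1 - ζ²) = 1 - ζ f`.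
These two relations collapse the Jacobian determinant to `det J · (1 + s) = 4 s (1 - 2p - s)`.
As `s > 0`, criticality means `s = 1 - 2p`, i.e. `ζ² = 4p(1 - p)` with `p ≤ 1/2`, and for
`ζ = (1 - p)/d` this is `1 - p = 4 p d²`. -/

open Filter Topology

namespace R2ClusterMeanField

/-- The linearization in `(m, f¹⁻, f²⁻)` with `f¹⁺ = f`, `f²⁺ = f²`. -/
noncomputable def jacobian (p ζ f : ℝ) : Matrix (Fin 3) (Fin 3) ℝ :=
  !![-p, 0, (1 - p) / 2;
     ζ * (1 - f ^ 2), -2, ζ;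
     ζ * f * (1 - f ^ 2), ζ * (1 + f ^ 2), -2 + ζ * f]

theorem det_jacobian_mul_two_sub {p ζ f : ℝ} (hf : ζ * (1 + f ^ 2) = 2 * f) :
    (jacobian p ζ f).det * (2 - ζ * f) = 4 * (1 - ζ * f) * (ζ * f - 2 * p) := by
  rw [jacobian, Matrix.det_fin_three]
  simp only [Matrix.of_apply, Matrix.cons_val', Matrix.cons_val_zero, Matrix.cons_val_one,
    Matrix.cons_val_two, Matrix.empty_val', Matrix.cons_val_fin_one, Matrix.head_cons,
    Matrix.tail_cons, Matrix.head_fin_const]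
  linear_combination
    ((p * ζ + (1 - p) / 2 * (1 - f ^ 2) * ζ) * (2 - ζ * f) + 2 * (1 - p) * ζ * f ^ 2) * hf

/-- The disordered value of `f¹⁺`; at `ζ = 0` division by zero gives `0`, the correct limit. -/
noncomputable def disorderedF (ζ : ℝ) : ℝ := (1 - √(1 - ζ ^ 2)) / ζ

theorem mul_disorderedF {ζ : ℝ} (hζ : ζ ^ 2 ≤ 1) : ζ * disorderedF ζ = 1 - √(1 - ζ ^ 2) := by
  rcases eq_or_ne ζ 0 with rfl | hζ0
  · simp [disorderedF]
  · exact mul_div_cancel₀ _ hζ0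

theorem disorderedF_isFixedPt {ζ : ℝ} (hζ : ζ ^ 2 ≤ 1) :
    ζ * (1 + disorderedF ζ ^ 2) = 2 * disorderedF ζ := by
  rcases eq_or_ne ζ 0 with rfl | hζ0
  · simp [disorderedF]
  · have hs := Real.sq_sqrt (sub_nonneg.2 hζ)
    have hf := mul_disorderedF hζ
    refine mul_left_cancel₀ hζ0 ?_
    linear_combination (ζ * disorderedF ζ - 1 - √(1 - ζ ^ 2)) * hf + hs

theorem det_jacobian_disorderedF_eq_zero_iff {p ζ : ℝ} (hζ : ζ ^ 2 < 1) :
    (jacobian p ζ (disorderedF ζ)).det = 0 ↔ √(1 - ζ ^ 2) = 1 - 2 * p := by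
  have h := det_jacobian_mul_two_sub (p := p) (disorderedF_isFixedPt hζ.le)
  rw [mul_disorderedF hζ.le] at h
  have h' : (jacobian p ζ (disorderedF ζ)).det * (1 + √(1 - ζ ^ 2)) =
      4 * √(1 - ζ ^ 2) * (1 - 2 * p - √(1 - ζ ^ 2)) := by
    linear_combination h
  rw [← mul_eq_zero_iff_right (b := 1 + √(1 - ζ ^ 2)) (by positivity), h',
    mul_eq_zero_iff_left (by positivity), sub_eq_zero, eq_comm]

theorem sqrt_one_sub_sq_eq_one_sub_two_mul_iff {p ζ : ℝ} (hζ : ζ ^ 2 ≤ 1) :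
    √(1 - ζ ^ 2) = 1 - 2 * p ↔ ζ ^ 2 = 4 * p * (1 - p) ∧ 2 * p ≤ 1 := by
  rw [Real.sqrt_eq_cases]
  constructor
  · rintro (⟨h, hp⟩ | ⟨h, -⟩)
    · exact ⟨by linear_combination h, by linarith⟩
    · linarith
  · rintro ⟨h, hp⟩
    exact Or.inl ⟨by linear_combination h, by linarith⟩

noncomputable def criticalP (d : ℝ) : ℝ := 1 / (1 + 4 * d ^ 2)

theorem div_sq_eq_four_mul_mul_iff {p d : ℝ} (hd : 1 ≤ 2 * d) :
    ((1 - p) / d) ^ 2 = 4 * p * (1 - p) ∧ 2 * p ≤ 1 ↔ p = criticalP d := by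
  have hd0 : d ≠ 0 := (by linarith : 0 < d).ne'
  have hden : 1 + 4 * d ^ 2 ≠ 0 := by positivity
  rw [criticalP, div_pow, div_eq_iff (pow_ne_zero 2 hd0), eq_div_iff hden]
  constructor
  · rintro ⟨h, hp⟩
    have := (mul_eq_zero.1 (show (1 - p) * (1 - p * (1 + 4 * d ^ 2)) = 0 by
      linear_combination h)).resolve_left (by linarith)
    linarith
  · intro h
    constructor
    · linear_combination -(1 - p) * h
    · nlinarith

theorem det_jacobian_eq_zero_iff {p d : ℝ} (hd : 1 < d) (hp : p ∈ Set.Icc 0 1) :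
    (jacobian p ((1 - p) / d) (disorderedF ((1 - p) / d))).det = 0 ↔ p = criticalP d := by
  have hζ : ((1 - p) / d) ^ 2 < 1 := by
    refine pow_lt_one₀ (div_nonneg (by linarith [hp.2]) (by linarith)) ?_ two_ne_zero
    rw [div_lt_one (by linarith)]
    linarith [hp.1]
  rw [det_jacobian_disorderedF_eq_zero_iff hζ, sqrt_one_sub_sq_eq_one_sub_two_mul_iff hζ.le,
    div_sq_eq_four_mul_mul_iff (by linarith)]

theorem tendsto_criticalP_mul_four_mul_sq :
    Tendsto (fun k : ℕ => criticalP k * (4 * (k : ℝ) ^ 2)) atTop (𝓝 1) := by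
  have h4k : Tendsto (fun k : ℕ => 4 * k ^ 2) atTop atTop :=
    tendsto_atTop_mono (fun k => by dsimp only [id]; nlinarith) tendsto_id
  refine ((tendsto_natCast_div_add_atTop (1 : ℝ)).comp h4k).congr fun k => ?_
  simp only [Function.comp_apply, criticalP]
  push_cast
  ring

end R2ClusterMeanField

open R2ClusterMeanField in
/-- Linearizing the cluster mean-field equations of the R₂ squeezing code in
`(m, f¹⁻, f²⁻)` about the disordered fixed point (with the symmetric variables
at their disordered values `f¹⁺ = (1−√(1−ζ²))/ζ`, `f²⁺ = (f¹⁺)²`,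
`ζ = (1−p)/d`, and `η = 0`), the Jacobian has a zero eigenvalue precisely at
`p_c = 1/(1+4d²)`; in particular `p_c = 1/17` for `d = 2`, and
`p_c ~ 1/(4d²)` as `d → ∞`. -/
theorem r2_cluster_meanfield_threshold (d : ℕ) (hd : 2 ≤ d) (p : ℝ)
    (hp : p ∈ Set.Icc (0 : ℝ) 1) :
    (let ζ : ℝ := (1 - p) / d
     let f1 : ℝ := (1 - Real.sqrt (1 - ζ ^ 2)) / ζ
     let f2 : ℝ := f1 ^ 2
     let J : Matrix (Fin 3) (Fin 3) ℝ :=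
       !![-p, 0, (1 - p) / 2;
          ζ * (1 - f2), -2, ζ;
          ζ * f1 * (1 - f2), ζ * (1 + f2), -2 + ζ * f1]
     J.det = 0 ↔ p = 1 / (1 + 4 * (d : ℝ) ^ 2)) ∧
    (1 : ℝ) / (1 + 4 * (2 : ℝ) ^ 2) = 1 / 17 ∧
    Tendsto (fun k : ℕ => (1 / (1 + 4 * (k : ℝ) ^ 2)) * (4 * (k : ℝ) ^ 2))
      atTop (nhds 1) :=
  ⟨det_jacobian_eq_zero_iff (by exact_mod_cast hd) hp, by norm_num,
    tendsto_criticalP_mul_four_mul_sq⟩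
end
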